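/- arXiv:1301.7569 — 2 statements merged into one kernel-verified Lean document; each statement's English description precedes it below -/
import Mathlib

section
/- Let X, Y, Z be Banach spaces, A : X → Y a bounded injective linear operator, and K : X → Z a compact linear operator. If there exists a constant C₁ > 0 such that ‖f‖_X ≤ C₁‖A f‖_Y + ‖K f‖_Z for all f ∈ X, then there exists a constant C > 0 such that ‖f‖_X ≤ C‖A f‖_Y for all f ∈ X. -/
theorem stability_removal_of_compact_term
    {X Y Z : Type*} [NormedAddCommGroup X] [NormedSpace ℝ X] [CompleteSpace X]
    [NormedAddCommGroup Y] [NormedSpace ℝ Y] [CompleteSpace Y]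
    [NormedAddCommGroup Z] [NormedSpace ℝ Z] [CompleteSpace Z]
    (A : X →L[ℝ] Y) (hA : Function.Injective A)
    (K : X →L[ℝ] Z) (hK : IsCompactOperator K)
    (C₁ : ℝ) (hC₁ : 0 < C₁)
    (hineq : ∀ f : X, ‖f‖ ≤ C₁ * ‖A f‖ + ‖K f‖) :
    ∃ C : ℝ, 0 < C ∧ ∀ f : X, ‖f‖ ≤ C * ‖A f‖ := by
  by_contra h
  push_neg at h
  -- choose sequence g n with ‖g n‖ = 1 and ‖A (g n)‖ < 1/(n+1)
  have hseq : ∀ n : ℕ, ∃ g : X, ‖g‖ = 1 ∧ ‖A g‖ < 1 / (n + 1) := by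
    intro n
    obtain ⟨f, hf⟩ := h (n + 1) (by positivity)
    have hf0 : f ≠ 0 := by
      rintro rfl
      simp at hf
    have hfpos : (0:ℝ) < ‖f‖ := norm_pos_iff.mpr hf0
    refine ⟨‖f‖⁻¹ • f, ?_, ?_⟩
    · simp [norm_smul, inv_mul_cancel₀ (norm_ne_zero_iff.mpr hf0)]
    · rw [map_smul, norm_smul, norm_inv, norm_norm]
      have hn : (0:ℝ) < (n:ℝ) + 1 := by positivity
      rw [show ‖f‖⁻¹ * ‖A f‖ = ‖A f‖ / ‖f‖ by ring, div_lt_div_iff₀ hfpos hn]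
      nlinarith [norm_nonneg (A f)]
  choose g hg1 hg2 using hseq
  -- the images K (g n) lie in a compact set
  have hb : ∀ n, g n ∈ Metric.closedBall (0:X) 1 := by
    intro n
    simp [Metric.mem_closedBall, dist_zero_right, (hg1 n).le]
  have hcpt : IsCompact (closure (K '' Metric.closedBall (0:X) 1)) :=
    hK.isCompact_closure_image_closedBall (𝕜₁ := ℝ) 1
  have hmem : ∀ n, K (g n) ∈ closure (K '' Metric.closedBall (0:X) 1) := fun n =>
    subset_closure ⟨g n, hb n, rfl⟩
  obtain ⟨z, _, φ, hφ, hz⟩ := hcpt.tendsto_subseq hmem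
  -- the subsequence g ∘ φ is Cauchy
  have hAtend : Filter.Tendsto (fun n => ‖A (g (φ n))‖) Filter.atTop (nhds 0) := by
    have h1 : Filter.Tendsto (fun n : ℕ => 1 / ((φ n : ℝ) + 1)) Filter.atTop (nhds 0) := by
      apply Filter.Tendsto.comp tendsto_one_div_add_atTop_nhds_zero_nat
      exact hφ.tendsto_atTop
    refine squeeze_zero (fun n => norm_nonneg _) (fun n => (hg2 (φ n)).le) h1
  have hcauchy : CauchySeq (fun n => g (φ n)) := by
    rw [Metric.cauchySeq_iff]
    intro ε hε
    have hKc : CauchySeq (fun n => K (g (φ n))) := hz.cauchySeq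
    rw [Metric.cauchySeq_iff] at hKc
    obtain ⟨N₁, hN₁⟩ := hKc (ε / 2) (by positivity)
    have hA4 : ∀ᶠ n in Filter.atTop, ‖A (g (φ n))‖ < ε / (4 * C₁) := by
      have := hAtend.eventually (eventually_lt_nhds (show (0:ℝ) < ε / (4 * C₁) by positivity))
      exact this
    obtain ⟨N₂, hN₂⟩ := Filter.eventually_atTop.mp hA4
    refine ⟨max N₁ N₂, fun m hm n hn => ?_⟩
    have key : ‖g (φ m) - g (φ n)‖ ≤ C₁ * ‖A (g (φ m)) - A (g (φ n))‖ +
        ‖K (g (φ m)) - K (g (φ n))‖ := by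
      have := hineq (g (φ m) - g (φ n))
      simpa using this
    have h1 : ‖A (g (φ m)) - A (g (φ n))‖ ≤ ‖A (g (φ m))‖ + ‖A (g (φ n))‖ :=
      norm_sub_le _ _
    have h2 : ‖A (g (φ m))‖ < ε / (4 * C₁) := hN₂ _ (le_trans (le_max_right _ _) hm)
    have h3 : ‖A (g (φ n))‖ < ε / (4 * C₁) := hN₂ _ (le_trans (le_max_right _ _) hn)
    have h4 : ‖K (g (φ m)) - K (g (φ n))‖ < ε / 2 := by
      have := hN₁ m (le_trans (le_max_left _ _) hm) n (le_trans (le_max_left _ _) hn)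
      rwa [dist_eq_norm] at this
    rw [dist_eq_norm]
    have hC₁' : C₁ * (ε / (4 * C₁) + ε / (4 * C₁)) = ε / 2 := by
      field_simp; ring
    calc ‖g (φ m) - g (φ n)‖
        ≤ C₁ * (‖A (g (φ m))‖ + ‖A (g (φ n))‖) + ‖K (g (φ m)) - K (g (φ n))‖ := by
          refine le_trans key (by nlinarith)
      _ < C₁ * (ε / (4 * C₁) + ε / (4 * C₁)) + ε / 2 := by
          have : C₁ * (‖A (g (φ m))‖ + ‖A (g (φ n))‖) ≤
              C₁ * (ε / (4 * C₁) + ε / (4 * C₁)) := by nlinarith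
          nlinarith
      _ = ε := by rw [hC₁']; ring
  obtain ⟨f, hf⟩ := cauchySeq_tendsto_of_complete hcauchy
  -- ‖f‖ = 1
  have hnf : ‖f‖ = 1 := by
    have := (continuous_norm.continuousAt.tendsto.comp hf)
    have h1 : Filter.Tendsto (fun n => ‖g (φ n)‖) Filter.atTop (nhds ‖f‖) := this
    have h2 : (fun n => ‖g (φ n)‖) = fun _ => (1:ℝ) := funext fun n => hg1 (φ n)
    rw [h2] at h1
    exact (tendsto_const_nhds_iff.mp h1).symm
  -- A f = 0
  have hAf : A f = 0 := by
    have h1 : Filter.Tendsto (fun n => A (g (φ n))) Filter.atTop (nhds (A f)) :=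
      (A.continuous.continuousAt.tendsto.comp hf)
    have h2 : Filter.Tendsto (fun n => A (g (φ n))) Filter.atTop (nhds 0) := by
      rw [tendsto_zero_iff_norm_tendsto_zero]
      exact hAtend
    exact tendsto_nhds_unique h1 h2
  have : f = 0 := hA (by simpa using hAf)
  rw [this] at hnf
  simp at hnf
end

section
/- For a ∈ [1/2, 1), with f_a(x) = μ xⁿ + (1 − μ) x where μ = (a − 1/2)/(a − aⁿ) and aⁿ < 1/2, the function ψ₀(x) = sin(π f_a(x)) satisfies ψ₀(x) > 0 for all x ∈ (0,1), ψ₀(0) = ψ₀(1) = 0, and ψ₀'(x) ≠ 0 for all x ∈ (0,1) with x ≠ a. -/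
/-!
Since `aⁿ < 1/2 ≤ a`, the weight `μ` lies in `[0, 1)`, so `f_a` is a strictly increasing map of
`[0, 1]` onto itself with `f_a' > 0` on `[0, ∞)`, and `f_a(a) = 1/2` by the choice of `μ`.
Hence `π f_a(x) ∈ (0, π)` on `(0, 1)`, which gives the positivity of `ψ₀`, and in
`ψ₀' = π f_a' · cos (π f_a)` the cosine vanishes only where `f_a = 1/2`, i.e. only at `x = a`.
-/

open Real Set

namespace Real

lemma sin_pi_mul_pos {t : ℝ} (ht : t ∈ Ioo (0 : ℝ) 1) : 0 < sin (π * t) :=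
  sin_pos_of_pos_of_lt_pi (mul_pos pi_pos ht.1) (by nlinarith [pi_pos, ht.2])

lemma cos_pi_mul_ne_zero {t : ℝ} (ht : t ∈ Ioo (0 : ℝ) 1) (ht_half : t ≠ 1 / 2) :
    cos (π * t) ≠ 0 := by
  rw [← sin_pi_div_two_sub, Ne, sin_eq_zero_iff_of_lt_of_lt (by nlinarith [pi_pos, ht.2])
    (by nlinarith [pi_pos, ht.1])]
  exact fun h ↦ ht_half (by nlinarith [pi_pos])

end Real

section PowMix

variable {μ : ℝ} {n : ℕ}

lemma strictMonoOn_pow_mix (hμ0 : 0 ≤ μ) (hμ1 : μ < 1) :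
    StrictMonoOn (fun x : ℝ ↦ μ * x ^ n + (1 - μ) * x) (Ici 0) := by
  intro x hx y _ hxy
  have h_pow : μ * x ^ n ≤ μ * y ^ n :=
    mul_le_mul_of_nonneg_left (pow_le_pow_left₀ hx hxy.le n) hμ0
  have h_lin : (1 - μ) * x < (1 - μ) * y := mul_lt_mul_of_pos_left hxy (by linarith)
  exact add_lt_add_of_le_of_lt h_pow h_lin

lemma hasDerivAt_pow_mix (x : ℝ) :
    HasDerivAt (fun x : ℝ ↦ μ * x ^ n + (1 - μ) * x) (μ * (n * x ^ (n - 1)) + (1 - μ)) x := by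
  simpa using ((hasDerivAt_pow n x).const_mul μ).fun_add ((hasDerivAt_id' x).const_mul (1 - μ))

lemma pow_mix_deriv_pos (hμ0 : 0 ≤ μ) (hμ1 : μ < 1) {x : ℝ} (hx : 0 ≤ x) :
    0 < μ * (n * x ^ (n - 1)) + (1 - μ) := by
  have : 0 ≤ μ * (n * x ^ (n - 1)) := by positivity
  linarith

lemma mapsTo_pow_mix_Ioo (hμ0 : 0 ≤ μ) (hμ1 : μ < 1) (hn : n ≠ 0) :
    MapsTo (fun x : ℝ ↦ μ * x ^ n + (1 - μ) * x) (Ioo 0 1) (Ioo 0 1) := by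
  simpa [zero_pow hn] using
    ((strictMonoOn_pow_mix (n := n) hμ0 hμ1).mono Icc_subset_Ici_self).mapsTo_Ioo (a := 0) (b := 1)

end PowMix

theorem psi0_properties (a : ℝ) (ha : a ∈ Set.Ico (1/2 : ℝ) 1)
    (n : ℕ) (hn1 : 1 ≤ n) (hn : a ^ n < 1/2) :
    let μ : ℝ := (a - 1/2) / (a - a ^ n)
    let f : ℝ → ℝ := fun x => μ * x ^ n + (1 - μ) * x
    let ψ₀ : ℝ → ℝ := fun x => Real.sin (π * f x)
    (∀ x ∈ Set.Ioo (0:ℝ) 1, 0 < ψ₀ x) ∧ ψ₀ 0 = 0 ∧ ψ₀ 1 = 0 ∧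
      (∀ x ∈ Set.Ioo (0:ℝ) 1, x ≠ a → deriv ψ₀ x ≠ 0) := by
  intro μ f ψ₀
  have hn0 : n ≠ 0 := by omega
  have h_gap : 0 < a - a ^ n := by linarith [ha.1]
  have hμ0 : 0 ≤ μ := div_nonneg (by linarith [ha.1]) h_gap.le
  have hμ1 : μ < 1 := (div_lt_one h_gap).2 (by linarith)
  have hfa : f a = 1 / 2 := by
    simp only [f, μ]
    field_simp
    ring
  have hf_maps : MapsTo f (Ioo 0 1) (Ioo 0 1) := mapsTo_pow_mix_Ioo hμ0 hμ1 hn0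
  refine ⟨fun x hx ↦ sin_pi_mul_pos (hf_maps hx), by simp [ψ₀, f, zero_pow hn0],
    by simp [ψ₀, f], fun x hx hxa ↦ ?_⟩
  have hψ : HasDerivAt ψ₀ (cos (π * f x) * (π * (μ * (n * x ^ (n - 1)) + (1 - μ)))) x :=
    (hasDerivAt_sin _).comp x ((hasDerivAt_pow_mix x).const_mul π)
  have hfx_ne : f x ≠ 1 / 2 := fun h ↦ hxa <| (strictMonoOn_pow_mix hμ0 hμ1).injOn
    (mem_Ici.2 hx.1.le) (mem_Ici.2 (by linarith [ha.1])) (h.trans hfa.symm)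
  rw [hψ.deriv]
  exact mul_ne_zero (cos_pi_mul_ne_zero (hf_maps hx) hfx_ne)
    (mul_pos pi_pos (pow_mix_deriv_pos hμ0 hμ1 hx.1.le)).ne'
end
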